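/- Let A → B be a homomorphism of commutative rings, I ⊆ B an ideal, M a module over B/I (regarded also as a B-module), and N a natural number. Then the canonical J^N(B/A)-linear map J^N_{B/A}(M) → J^N_{(B/I)/A}(M), induced by the surjection B ⊗_A M → (B/I) ⊗_A M, is surjective, and its kernel equals I · J^N_{B/A}(M), where I acts through the first structure map p₁. In other words, there is a short exact sequence 0 → I · J^N_{B/A}(M) → J^N_{B/A}(M) → J^N_{(B/I)/A}(M) → 0. -/

import Mathlib

/-!
Basic infrastructure for jet algebras and jet modules, following the paper
"Basics of jet modules and algebraic linear differential operators".

For a ring homomorphism `k → A`, the diagonal ideal `I_{A/k} ⊆ A ⊗[k] A` is the kernel of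
the multiplication map; the `N`-th jet algebra is `J^N(A/k) = (A ⊗[k] A) ⧸ I_{A/k}^{N+1}`,
with its two `A`-algebra structure maps `p₁ : a ↦ a ⊗ 1` and `p₂ : a ↦ 1 ⊗ a`.
For an `A`-module `M`, `A ⊗[k] M` is a module over `A ⊗[k] A` via
`(a ⊗ b) • (x ⊗ m) = (a * x) ⊗ (b • m)`, and the `N`-th jet module is
`J^N(M/k) = (A ⊗[k] M) ⧸ I_{A/k}^{N+1} · (A ⊗[k] M)`, a module over `J^N(A/k)`,
equipped with the universal filtered derivation `d^N : M → J^N(M/k)`, `m ↦ [1 ⊗ m]`.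
-/

open scoped TensorProduct

namespace JetPaper

section Bimodule

variable (R B C M P : Type*) [CommRing R]
  [CommRing B] [Algebra R B] [CommRing C] [Algebra R C]
  [AddCommGroup M] [Module R M] [Module B M] [IsScalarTower R B M]
  [AddCommGroup P] [Module R P] [Module C P] [IsScalarTower R C P]

/-- The action of `C` on `M ⊗[R] P` through the right-hand factor, as an algebra
homomorphism into endomorphisms. -/
noncomputable def rightSMulEnd : C →ₐ[R] Module.End R (M ⊗[R] P) where
  toFun c := LinearMap.lTensor M (Algebra.lsmul R R P c)
  map_one' := LinearMap.ext fun x => by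
    induction x using TensorProduct.induction_on with
    | zero => simp
    | tmul m p => simp
    | add u v hu hv => simp only [map_add, hu, hv]
  map_mul' c c' := LinearMap.ext fun x => by
    induction x using TensorProduct.induction_on with
    | zero => simp
    | tmul m p => simp [mul_smul, Module.End.mul_apply]
    | add u v hu hv => simp only [map_add, Module.End.mul_apply] at hu hv ⊢; rw [hu, hv]
  map_zero' := LinearMap.ext fun x => by
    induction x using TensorProduct.induction_on with
    | zero => simp
    | tmul m p => simp
    | add u v hu hv => simp only [map_add, hu, hv]
  map_add' c c' := LinearMap.ext fun x => by
    induction x using TensorProduct.induction_on with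
    | zero => simp
    | tmul m p => simp [add_smul, TensorProduct.tmul_add]
    | add u v hu hv =>
        simp only [map_add, LinearMap.add_apply] at hu hv ⊢
        rw [hu, hv]
  commutes' r := LinearMap.ext fun x => by
    induction x using TensorProduct.induction_on with
    | zero => simp
    | tmul m p =>
        simp only [LinearMap.lTensor_tmul, Algebra.lsmul_coe,
          Module.algebraMap_end_apply, algebraMap_smul]
        rw [TensorProduct.tmul_smul]
    | add u v hu hv => simp only [map_add, hu, hv]

@[simp] lemma rightSMulEnd_tmul (c : C) (m : M) (p : P) :
    rightSMulEnd R C M P c (m ⊗ₜ[R] p) = m ⊗ₜ[R] (c • p) := by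
  simp [rightSMulEnd]

/-- The algebra homomorphism `B ⊗[R] C → End (M ⊗[R] P)` realizing the natural
bimodule structure `(b ⊗ c) • (m ⊗ p) = (b • m) ⊗ (c • p)`. -/
noncomputable def bimodMap : (B ⊗[R] C) →ₐ[R] Module.End R (M ⊗[R] P) :=
  Algebra.TensorProduct.lift (Algebra.lsmul R R (M ⊗[R] P)) (rightSMulEnd R C M P)
    (fun b c => LinearMap.ext fun x => by
      induction x using TensorProduct.induction_on with
      | zero => simp [Module.End.mul_apply]
      | tmul m p => simp [Module.End.mul_apply, TensorProduct.smul_tmul']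
      | add u v hu hv =>
          simp only [Module.End.mul_apply] at hu hv ⊢
          simp only [map_add, hu, hv])

/-- The `B ⊗[R] C`-module structure on `M ⊗[R] P`, where `B` acts through the left factor
and `C` through the right one. -/
noncomputable def bimodule : Module (B ⊗[R] C) (M ⊗[R] P) :=
  Module.compHom _ (bimodMap R B C M P).toRingHom

/-- The action of `C` on `M ⊗[R] P` through the right-hand factor, as a module structure. -/
noncomputable def rightTensorModule : Module C (M ⊗[R] P) :=
  Module.compHom _ (rightSMulEnd R C M P).toRingHom

end Bimodule

section BiTensorDef

/-- Type synonym for `M ⊗[R] P`, regarded as a module over `B ⊗[R] C`, where `B` acts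
through the left factor and `C` through the right factor. -/
@[nolint unusedArguments]
def BiTensor (R B C M P : Type*) [CommRing R]
    [CommRing B] [Algebra R B] [CommRing C] [Algebra R C]
    [AddCommGroup M] [Module R M] [Module B M] [IsScalarTower R B M]
    [AddCommGroup P] [Module R P] [Module C P] [IsScalarTower R C P] : Type _ :=
  M ⊗[R] P

variable (R B C M P : Type*) [CommRing R]
  [CommRing B] [Algebra R B] [CommRing C] [Algebra R C]
  [AddCommGroup M] [Module R M] [Module B M] [IsScalarTower R B M]
  [AddCommGroup P] [Module R P] [Module C P] [IsScalarTower R C P]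

/-- The canonical (identity) map `M ⊗[R] P → BiTensor R B C M P`. -/
def BiTensor.of : M ⊗[R] P → BiTensor R B C M P := id

noncomputable instance : AddCommGroup (BiTensor R B C M P) :=
  inferInstanceAs (AddCommGroup (M ⊗[R] P))

noncomputable instance : Module R (BiTensor R B C M P) :=
  inferInstanceAs (Module R (M ⊗[R] P))

noncomputable instance : Module (B ⊗[R] C) (BiTensor R B C M P) := bimodule R B C M P

noncomputable instance : Module C (BiTensor R B C M P) := rightTensorModule R C M P

lemma BiTensor.smul_of (b : B) (c : C) (m : M) (p : P) :
    (b ⊗ₜ[R] c : B ⊗[R] C) • BiTensor.of R B C M P (m ⊗ₜ[R] p) =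
      BiTensor.of R B C M P ((b • m) ⊗ₜ[R] (c • p)) := by
  show bimodMap R B C M P (b ⊗ₜ[R] c) (m ⊗ₜ[R] p) = _
  rw [show bimodMap R B C M P (b ⊗ₜ[R] c) = Algebra.lsmul R R (M ⊗[R] P) b * rightSMulEnd R C M P c
    from Algebra.TensorProduct.lift_tmul _ _ _ b c]
  simp only [Module.End.mul_apply, TensorProduct.smul_tmul', rightSMulEnd_tmul,
    Algebra.lsmul_coe]
  rfl

lemma BiTensor.rsmul_of (c : C) (m : M) (p : P) :
    c • BiTensor.of R B C M P (m ⊗ₜ[R] p) = BiTensor.of R B C M P (m ⊗ₜ[R] (c • p)) := by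
  show rightSMulEnd R C M P c (m ⊗ₜ[R] p) = _
  simp only [rightSMulEnd_tmul]
  rfl

attribute [local instance] Algebra.TensorProduct.rightAlgebra in
instance : IsScalarTower C (B ⊗[R] C) (BiTensor R B C M P) := by
  refine IsScalarTower.of_algebraMap_smul
    (R := C) (A := B ⊗[R] C) (M := BiTensor R B C M P) fun c x => ?_
  have halg : algebraMap C (B ⊗[R] C) c = (1 : B) ⊗ₜ[R] c := rfl
  have key : ∀ y : M ⊗[R] P,
      ((1 : B) ⊗ₜ[R] c : B ⊗[R] C) • BiTensor.of R B C M P y =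
        c • BiTensor.of R B C M P y := by
    intro y
    induction y using TensorProduct.induction_on with
    | zero =>
        show ((1 : B) ⊗ₜ[R] c : B ⊗[R] C) • (0 : BiTensor R B C M P) =
          c • (0 : BiTensor R B C M P)
        rw [smul_zero, smul_zero]
    | tmul m p => rw [BiTensor.smul_of, one_smul, BiTensor.rsmul_of]
    | add u v hu hv =>
        have hadd : ∀ u v : M ⊗[R] P, BiTensor.of R B C M P (u + v) =
            BiTensor.of R B C M P u + BiTensor.of R B C M P v := fun _ _ => rfl
        rw [hadd, smul_add, smul_add, hu, hv]
  rw [halg]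
  exact key x

end BiTensorDef

section JetDef

variable (k A : Type*) [CommRing k] [CommRing A] [Algebra k A]

/-- The diagonal ideal `I_{A/k} ⊆ A ⊗[k] A`: the kernel of the multiplication map. -/
noncomputable abbrev diagIdeal : Ideal (A ⊗[k] A) := KaehlerDifferential.ideal k A

/-- The `N`-th jet algebra `J^N(A/k) = (A ⊗[k] A) ⧸ I_{A/k}^{N+1}`. -/
noncomputable abbrev JetAlg (N : ℕ) : Type _ :=
  (A ⊗[k] A) ⧸ (diagIdeal k A ^ (N + 1))

/-- The first `A`-algebra structure map `p₁ : A → J^N(A/k)`, `a ↦ a ⊗ 1`. -/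
noncomputable def jetP1 (N : ℕ) : A →+* JetAlg k A N :=
  (Ideal.Quotient.mk _).comp Algebra.TensorProduct.includeLeftRingHom

/-- The second `A`-algebra structure map `p₂ : A → J^N(A/k)`, `a ↦ 1 ⊗ a`. -/
noncomputable def jetP2 (N : ℕ) : A →+* JetAlg k A N :=
  (Ideal.Quotient.mk _).comp (Algebra.TensorProduct.includeRight : A →ₐ[k] A ⊗[k] A).toRingHom

variable (M : Type*) [AddCommGroup M] [Module k M] [Module A M] [IsScalarTower k A M]

/-- `A ⊗[k] M` is a module over `A ⊗[k] A` via `(a ⊗ b) • (x ⊗ m) = (a * x) ⊗ (b • m)`. -/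
noncomputable instance jetTensorModule : Module (A ⊗[k] A) (A ⊗[k] M) :=
  bimodule k A A A M

@[simp] lemma jet_smul_tmul (a b x : A) (m : M) :
    (a ⊗ₜ[k] b : A ⊗[k] A) • (x ⊗ₜ[k] m : A ⊗[k] M) = (a * x) ⊗ₜ[k] (b • m) := by
  show bimodMap k A A A M (a ⊗ₜ[k] b) (x ⊗ₜ[k] m) = _
  rw [show bimodMap k A A A M (a ⊗ₜ[k] b) = Algebra.lsmul k k (A ⊗[k] M) a * rightSMulEnd k A A M b
    from Algebra.TensorProduct.lift_tmul _ _ _ a b]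
  simp [Module.End.mul_apply, TensorProduct.smul_tmul', smul_eq_mul]

instance jetTower1 : IsScalarTower A (A ⊗[k] A) (A ⊗[k] M) :=
  IsScalarTower.of_algebraMap_smul fun a x => by
    have halg : algebraMap A (A ⊗[k] A) a = a ⊗ₜ[k] (1 : A) := rfl
    rw [halg]
    induction x using TensorProduct.induction_on with
    | zero => simp
    | tmul y m => rw [jet_smul_tmul, TensorProduct.smul_tmul']; simp
    | add u v hu hv => rw [smul_add, hu, hv, smul_add]

instance jetTower0 : IsScalarTower k (A ⊗[k] A) (A ⊗[k] M) :=
  IsScalarTower.of_algebraMap_smul fun r x => by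
    rw [IsScalarTower.algebraMap_apply k A (A ⊗[k] A), algebraMap_smul, algebraMap_smul]

/-- The `N`-th jet module `J^N(M/k) = (A ⊗[k] M) ⧸ I_{A/k}^{N+1}·(A ⊗[k] M)`;
it is a module over `J^N(A/k)`. -/
noncomputable abbrev JetMod (N : ℕ) : Type _ :=
  (A ⊗[k] M) ⧸ ((diagIdeal k A ^ (N + 1)) • (⊤ : Submodule (A ⊗[k] A) (A ⊗[k] M)))

/-- The universal (filtered) derivation `d^N_{M/k} : M → J^N(M/k)`, `m ↦ [1 ⊗ m]`. -/
noncomputable def jetD (N : ℕ) : M → JetMod k A M N :=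
  fun m => Submodule.Quotient.mk ((1 : A) ⊗ₜ[k] m)

instance jetModTower (N : ℕ) : IsScalarTower k A (JetMod k A M N) :=
  IsScalarTower.of_algebraMap_smul fun r x => by
    obtain ⟨y, rfl⟩ := Submodule.Quotient.mk_surjective _ x
    rw [← Submodule.Quotient.mk_smul, ← Submodule.Quotient.mk_smul, algebraMap_smul]

instance jetQuotTower (N : ℕ) : IsScalarTower A (JetAlg k A N) (JetMod k A M N) := by
  refine IsScalarTower.of_algebraMap_smul
    (R := A) (A := JetAlg k A N) (M := JetMod k A M N) fun a x => ?_
  obtain ⟨y, rfl⟩ := Submodule.Quotient.mk_surjective _ x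
  have h1 : algebraMap A (JetAlg k A N) a • (Submodule.Quotient.mk y : JetMod k A M N) =
      Submodule.Quotient.mk ((algebraMap A (A ⊗[k] A) a) • y) := rfl
  rw [h1, algebraMap_smul (A ⊗[k] A) a y, Submodule.Quotient.mk_smul]

end JetDef

end JetPaper


namespace JetPaper

section ExactSequenceI

variable (A B : Type*) [CommRing A] [CommRing B] [Algebra A B] (I : Ideal B)

/-- The canonical map `B ⊗[A] B → (B/I) ⊗[A] (B/I)`. -/
noncomputable def quotTensorMap : (B ⊗[A] B) →ₐ[A] ((B ⧸ I) ⊗[A] (B ⧸ I)) :=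
  Algebra.TensorProduct.map (Ideal.Quotient.mkₐ A I) (Ideal.Quotient.mkₐ A I)

lemma quotTensorMap_diag_le :
    Ideal.map (quotTensorMap A B I) (diagIdeal A B) ≤ diagIdeal A (B ⧸ I) := by
  rw [Ideal.map_le_iff_le_comap]
  intro x hx
  have hx0 : (Algebra.TensorProduct.lmul' A (S := B)) x = 0 := by
    simpa [RingHom.mem_ker] using hx
  have hcomp : (Algebra.TensorProduct.lmul' A (S := B ⧸ I)).comp (quotTensorMap A B I) =
      (Ideal.Quotient.mkₐ A I).comp (Algebra.TensorProduct.lmul' A (S := B)) := by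
    apply Algebra.TensorProduct.ext
    · ext b
      simp [quotTensorMap]
    · ext b
      simp [quotTensorMap]
  rw [Ideal.mem_comap]
  have h := AlgHom.congr_fun hcomp x
  simp only [AlgHom.coe_comp, Function.comp_apply] at h
  rw [RingHom.mem_ker, h, hx0, map_zero]

/-- The canonical ring map `J^N(B/A) → J^N((B/I)/A)`. -/
noncomputable def jetAlgQuotMap (N : ℕ) : JetAlg A B N →+* JetAlg A (B ⧸ I) N :=
  Ideal.Quotient.lift (diagIdeal A B ^ (N + 1))
    ((Ideal.Quotient.mk (diagIdeal A (B ⧸ I) ^ (N + 1))).comp (quotTensorMap A B I).toRingHom)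
    (fun x hx => by
      rw [RingHom.comp_apply, Ideal.Quotient.eq_zero_iff_mem]
      have h1 : (quotTensorMap A B I) x ∈
          Ideal.map (quotTensorMap A B I) (diagIdeal A B ^ (N + 1)) :=
        Ideal.mem_map_of_mem _ hx
      rw [Ideal.map_pow] at h1
      exact Ideal.pow_right_mono (quotTensorMap_diag_le A B I) (N + 1) h1)

variable (M : Type*) [AddCommGroup M] [Module A M] [Module B M] [IsScalarTower A B M]
  [Module (B ⧸ I) M] [IsScalarTower B (B ⧸ I) M] [IsScalarTower A (B ⧸ I) M]

/-- `J^N_{(B/I)/A}(M)` as a module over `J^N(B/A)`, via the canonical ring map. -/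
noncomputable def jetPulledModule (N : ℕ) :
    Module (JetAlg A B N) (JetMod A (B ⧸ I) M N) :=
  Module.compHom _ (jetAlgQuotMap A B I N)

/-!
The map `B ⊗[A] M → (B ⧸ I) ⊗[A] M` is surjective and semilinear over the surjection
`B ⊗[A] B → (B ⧸ I) ⊗[A] (B ⧸ I)`, which maps the diagonal ideal onto the diagonal ideal (both
are generated by the elements `1 ⊗ b - b ⊗ 1`). Hence it maps `I_{B/A}^{N+1} · (B ⊗[A] M)` onto
`I_{(B/I)/A}^{N+1} · ((B ⧸ I) ⊗[A] M)`, so the induced map of jet modules is surjective and its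
kernel is the image of the kernel of `B ⊗[A] M → (B ⧸ I) ⊗[A] M`. By right exactness of
`- ⊗[A] M`, that kernel is spanned by the elements `i ⊗ m = (i ⊗ 1) · (1 ⊗ m)` with `i ∈ I`.
-/

theorem _root_.Submodule.map_smul_top_of_surjective {R S P Q : Type*} [Semiring R] [Semiring S]
    [AddCommMonoid P] [Module R P] [AddCommMonoid Q] [Module S Q]
    {σ : R →+* S} [RingHomSurjective σ] (f : P →ₛₗ[σ] Q) (hf : Function.Surjective f)
    (J : Ideal R) : (J • ⊤ : Submodule R P).map f = J.map σ • ⊤ := by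
  refine le_antisymm (Submodule.map_le_iff_le_comap.mpr <| Submodule.smul_le.mpr ?_) ?_
  · intro j hj x _
    rw [Submodule.mem_comap, LinearMap.map_smulₛₗ]
    exact Submodule.smul_mem_smul (Ideal.mem_map_of_mem σ hj) Submodule.mem_top
  · refine Submodule.smul_le.mpr fun r hr y _ => ?_
    obtain ⟨j, hj, rfl⟩ := (Ideal.mem_map_iff_of_surjective σ σ.surjective).mp hr
    obtain ⟨x, rfl⟩ := hf y
    rw [← LinearMap.map_smulₛₗ]
    exact Submodule.mem_map_of_mem (Submodule.smul_mem_smul hj Submodule.mem_top)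

theorem _root_.Submodule.ker_mapQ_of_map_eq {R S P Q : Type*} [Ring R] [Ring S]
    [AddCommGroup P] [Module R P] [AddCommGroup Q] [Module S Q]
    {σ : R →+* S} [RingHomSurjective σ] (f : P →ₛₗ[σ] Q) {p : Submodule R P}
    {q : Submodule S Q} (h : p ≤ q.comap f) (hpq : p.map f = q) :
    LinearMap.ker (p.mapQ q f h) = (LinearMap.ker f).map p.mkQ := by
  rw [Submodule.ker_mapQ, ← hpq, Submodule.comap_map_eq, Submodule.map_sup,
    Submodule.mkQ_map_self, bot_sup_eq]

lemma quotTensorMap_tmul (b c : B) :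
    quotTensorMap A B I (b ⊗ₜ[A] c) = Ideal.Quotient.mk I b ⊗ₜ[A] Ideal.Quotient.mk I c :=
  rfl

lemma quotTensorMap_surjective : Function.Surjective (quotTensorMap A B I) :=
  Algebra.TensorProduct.map_surjective _ _ Ideal.Quotient.mk_surjective
    Ideal.Quotient.mk_surjective

instance : RingHomSurjective (quotTensorMap A B I).toRingHom :=
  ⟨quotTensorMap_surjective A B I⟩

lemma map_quotTensorMap_diagIdeal :
    Ideal.map (quotTensorMap A B I) (diagIdeal A B) = diagIdeal A (B ⧸ I) := by
  simp only [diagIdeal, ← KaehlerDifferential.span_range_eq_ideal, Ideal.map_span,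
    ← Set.range_comp]
  congr 1
  rw [← Ideal.Quotient.mk_surjective.range_comp
    (fun s : B ⧸ I => (1 : B ⧸ I) ⊗ₜ[A] s - s ⊗ₜ[A] (1 : B ⧸ I))]
  congr 1

noncomputable def quotTensorModMap :
    (B ⊗[A] M) →ₛₗ[(quotTensorMap A B I).toRingHom] ((B ⧸ I) ⊗[A] M) where
  __ := LinearMap.rTensor M (Ideal.Quotient.mkₐ A I).toLinearMap
  map_smul' z y := by
    change LinearMap.rTensor M _ (z • y) = quotTensorMap A B I z • LinearMap.rTensor M _ y
    induction z using TensorProduct.induction_on with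
    | zero =>
      rw [zero_smul, map_zero, map_zero]
      exact (zero_smul ((B ⧸ I) ⊗[A] (B ⧸ I)) (_ : (B ⧸ I) ⊗[A] M)).symm
    | add u v hu hv => simp only [add_smul, map_add, hu, hv]
    | tmul b c =>
      induction y using TensorProduct.induction_on with
      | zero => simp only [smul_zero, map_zero]
      | add u v hu hv => simp only [smul_add, map_add, hu, hv]
      | tmul x m =>
        simp [quotTensorMap_tmul, ← Ideal.Quotient.algebraMap_eq, algebraMap_smul]

lemma quotTensorModMap_surjective : Function.Surjective (quotTensorModMap A B I M) :=
  LinearMap.rTensor_surjective M (g := (Ideal.Quotient.mkₐ A I).toLinearMap)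
    Ideal.Quotient.mk_surjective

lemma mem_ker_quotTensorModMap {t : B ⊗[A] M} :
    t ∈ LinearMap.ker (quotTensorModMap A B I M) ↔
      t ∈ LinearMap.range (LinearMap.rTensor M (I.restrictScalars A).subtype) := by
  have hI : Function.Exact (I.restrictScalars A).subtype (Ideal.Quotient.mkₐ A I).toLinearMap :=
    fun b => Ideal.Quotient.eq_zero_iff_mem.trans
      ⟨fun hb => ⟨⟨b, hb⟩, rfl⟩, by rintro ⟨c, rfl⟩; exact c.2⟩
  exact rTensor_exact M hI Ideal.Quotient.mk_surjective t

lemma map_quotTensorModMap_diagIdeal_pow_smul_top (N : ℕ) :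
    (diagIdeal A B ^ (N + 1) • ⊤ : Submodule (B ⊗[A] B) (B ⊗[A] M)).map
        (quotTensorModMap A B I M) =
      diagIdeal A (B ⧸ I) ^ (N + 1) • ⊤ := by
  rw [Submodule.map_smul_top_of_surjective _ (quotTensorModMap_surjective A B I M),
    Ideal.map_pow]
  exact congrArg (fun J : Ideal _ => J ^ (N + 1) • ⊤) (map_quotTensorMap_diagIdeal A B I)

noncomputable def jetModQuotMap (N : ℕ) :
    JetMod A B M N →ₛₗ[(quotTensorMap A B I).toRingHom] JetMod A (B ⧸ I) M N :=
  Submodule.mapQ _ _ (quotTensorModMap A B I M) <| Submodule.map_le_iff_le_comap.mp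
    (map_quotTensorModMap_diagIdeal_pow_smul_top A B I M N).le

lemma jetModQuotMap_surjective (N : ℕ) : Function.Surjective (jetModQuotMap A B I M N) := by
  intro x
  obtain ⟨w, rfl⟩ := Submodule.Quotient.mk_surjective _ x
  obtain ⟨y, rfl⟩ := quotTensorModMap_surjective A B I M w
  exact ⟨Submodule.Quotient.mk y, rfl⟩

lemma ker_jetModQuotMap (N : ℕ) :
    LinearMap.ker (jetModQuotMap A B I M N) =
      (LinearMap.ker (quotTensorModMap A B I M)).map (Submodule.mkQ _) :=
  Submodule.ker_mapQ_of_map_eq _ _ (map_quotTensorModMap_diagIdeal_pow_smul_top A B I M N)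

lemma jetModQuotMap_jetAlg_smul (N : ℕ) (r : JetAlg A B N) (x : JetMod A B M N) :
    jetModQuotMap A B I M N (r • x) = jetAlgQuotMap A B I N r • jetModQuotMap A B I M N x := by
  obtain ⟨z, rfl⟩ := Ideal.Quotient.mk_surjective r
  obtain ⟨y, rfl⟩ := Submodule.Quotient.mk_surjective _ x
  exact congrArg Submodule.Quotient.mk (LinearMap.map_smulₛₗ (quotTensorModMap A B I M) z y)

lemma map_jetP1_le_ker_jetAlgQuotMap (N : ℕ) :
    Ideal.map (jetP1 A B N) I ≤ RingHom.ker (jetAlgQuotMap A B I N) := by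
  refine Ideal.map_le_iff_le_comap.mpr fun b hb => ?_
  rw [Ideal.mem_comap, RingHom.mem_ker]
  show Ideal.Quotient.mk _ (Ideal.Quotient.mk I b ⊗ₜ[A] (1 : B ⧸ I)) = 0
  rw [Ideal.Quotient.eq_zero_iff_mem.mpr hb, TensorProduct.zero_tmul, map_zero]

lemma mk_mem_jetP1_smul_top_of_mem_ker (N : ℕ) {t : B ⊗[A] M}
    (ht : t ∈ LinearMap.ker (quotTensorModMap A B I M)) :
    (Submodule.Quotient.mk t : JetMod A B M N) ∈
      Ideal.map (jetP1 A B N) I • (⊤ : Submodule (JetAlg A B N) (JetMod A B M N)) := by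
  obtain ⟨u, rfl⟩ := (mem_ker_quotTensorModMap A B I M).mp ht
  clear ht
  induction u using TensorProduct.induction_on with
  | zero => simp only [map_zero, Submodule.Quotient.mk_zero, zero_mem]
  | add u v hu hv => simpa only [map_add, Submodule.Quotient.mk_add] using add_mem hu hv
  | tmul i m =>
    have hi : (Submodule.Quotient.mk (i.1 ⊗ₜ[A] m) : JetMod A B M N) =
        jetP1 A B N i • Submodule.Quotient.mk ((1 : B) ⊗ₜ[A] m) := by
      rw [jetP1, RingHom.comp_apply, Module.Quotient.mk_smul_mk]
      simp
    rw [LinearMap.rTensor_tmul, Submodule.subtype_apply, hi]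
    exact Submodule.smul_mem_smul (Ideal.mem_map_of_mem _ i.2) Submodule.mem_top

/-- (Exact sequence I) For `A → B`, an ideal `I ⊆ B` and a `B/I`-module
`M`, the canonical `J^N(B/A)`-linear map `J^N_{B/A}(M) → J^N_{(B/I)/A}(M)` is surjective
with kernel `I·J^N_{B/A}(M)` (where `I` acts through `p₁`):
`0 → I·J^N_{B/A}(M) → J^N_{B/A}(M) → J^N_{(B/I)/A}(M) → 0` is exact. -/
theorem jet_exact_sequence_I (N : ℕ) :
    letI := jetPulledModule A B I M N
    ∃ π : JetMod A B M N →ₗ[JetAlg A B N] JetMod A (B ⧸ I) M N,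
      (∀ (b : B) (m : M),
        π (Submodule.Quotient.mk (b ⊗ₜ[A] m)) =
          Submodule.Quotient.mk ((Ideal.Quotient.mk I b) ⊗ₜ[A] m)) ∧
      Function.Surjective π ∧
      LinearMap.ker π =
        Ideal.map (jetP1 A B N) I • (⊤ : Submodule (JetAlg A B N) (JetMod A B M N)) := by
  let _ := jetPulledModule A B I M N
  let π : JetMod A B M N →ₗ[JetAlg A B N] JetMod A (B ⧸ I) M N :=
    { jetModQuotMap A B I M N with map_smul' := jetModQuotMap_jetAlg_smul A B I M N }
  refine ⟨π, fun b m => rfl, jetModQuotMap_surjective A B I M N, le_antisymm ?_ ?_⟩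
  · intro x hx
    obtain ⟨t, ht, rfl⟩ : x ∈ (LinearMap.ker (quotTensorModMap A B I M)).map (Submodule.mkQ _) :=
      ker_jetModQuotMap A B I M N ▸ hx
    exact mk_mem_jetP1_smul_top_of_mem_ker A B I M N ht
  · refine Submodule.smul_le.mpr fun r hr x _ => ?_
    show jetModQuotMap A B I M N (r • x) = 0
    rw [jetModQuotMap_jetAlg_smul, map_jetP1_le_ker_jetAlgQuotMap A B I N hr, zero_smul]

end ExactSequenceI

end JetPaper
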